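/- arXiv:1901.02471 — 7 statements merged into one kernel-verified Lean document; each statement's English description precedes it below -/
import Mathlib

section
/- Let α > 1, c > 0, ξ = 1/α, and 0 < p < q ≤ 1. Let F be the Pareto(α,c) CDF, so that f(F⁻¹(x)) = (α/c)(1−x)^(1+1/α), and let J(x) = 1[1−q < x ≤ 1−p]. Then ∫₀¹∫₀¹ [J(x₁)J(x₂)/(f(F⁻¹(x₁)) f(F⁻¹(x₂)))] (min{x₁,x₂} − x₁x₂) dx₁ dx₂ = (2c²ξ²/(1−ξ)) [ T(p,q) + p^(1−ξ)(q^(−ξ) − p^(−ξ))/ξ + (2p^(1−ξ)q^(1−ξ) − p^(2−2ξ) − q^(2−2ξ))/(2−2ξ) ], where T(p,q) = (q^(1−2ξ) − p^(1−2ξ))/(1−2ξ) if ξ ≠ 1/2 and T(p,q) = log(q/p) if ξ = 1/2. -/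
open MeasureTheory intervalIntegral Real

/-!
The substitution `u = 1 - x` leaves the Brownian-bridge kernel `min x y - x y` invariant and turns
the weights `1 / f(F⁻¹(x))` into `c ξ u^(-1-ξ)`, so the integral is
`(c ξ)² ∫_p^q ∫_p^q (min u v - u v) u^(-1-ξ) v^(-1-ξ)`. Splitting the inner integral at `u = v`
leaves integrals of pure powers. The only one that can be logarithmic is `∫ v^(-2ξ)`, and it
enters the algebra solely through `(1 - 2ξ) ∫_p^q v^(-2ξ) = q^(1-2ξ) - p^(1-2ξ)`, which holds for
every `ξ`, so the case `ξ = 1/2` needs no separate computation.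
-/

lemma integral_ite_Ioc_mul {l a b r : ℝ} (hla : l ≤ a) (hab : a ≤ b) (hbr : b ≤ r)
    (g : ℝ → ℝ) :
    ∫ x in l..r, (if a < x ∧ x ≤ b then (1 : ℝ) else 0) * g x = ∫ x in a..b, g x := by
  have hind : (fun x => (if a < x ∧ x ≤ b then (1 : ℝ) else 0) * g x) =
      (Set.Ioc a b).indicator g := by
    ext x
    by_cases hx : a < x ∧ x ≤ b <;> simp [hx]
  rw [hind, integral_of_le (hla.trans (hab.trans hbr)), integral_of_le hab,
    setIntegral_indicator measurableSet_Ioc,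
    Set.inter_eq_self_of_subset_right (Set.Ioc_subset_Ioc hla hbr)]

lemma integral_integral_ite_Ioc_mul {l a b r : ℝ} (hla : l ≤ a) (hab : a ≤ b) (hbr : b ≤ r)
    (f : ℝ → ℝ → ℝ) :
    ∫ x in l..r, ∫ y in l..r,
        (if a < x ∧ x ≤ b then (1 : ℝ) else 0) * (if a < y ∧ y ≤ b then (1 : ℝ) else 0) * f x y =
      ∫ x in a..b, ∫ y in a..b, f x y := by
  simp_rw [mul_assoc, intervalIntegral.integral_const_mul, integral_ite_Ioc_mul hla hab hbr]

lemma integral_integral_comp_sub_sub (f : ℝ → ℝ → ℝ) (d p q : ℝ) :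
    ∫ x in d - q..d - p, ∫ y in d - q..d - p, f (d - x) (d - y) =
      ∫ u in p..q, ∫ v in p..q, f u v := by
  simp_rw [integral_comp_sub_left (f _) d, sub_sub_cancel]
  rw [integral_comp_sub_left (fun u => ∫ v in p..q, f u v) d, sub_sub_cancel, sub_sub_cancel]

lemma min_one_sub_sub_mul_one_sub (x y : ℝ) :
    min (1 - x) (1 - y) - (1 - x) * (1 - y) = min x y - x * y := by
  linarith [min_sub_sub_left 1 x y, min_add_max x y]

lemma integral_integral_min_sub_mul_div_comp_one_sub (g : ℝ → ℝ) (p q : ℝ) :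
    ∫ x in 1 - q..1 - p, ∫ y in 1 - q..1 - p, (min x y - x * y) / (g (1 - x) * g (1 - y)) =
      ∫ u in p..q, ∫ v in p..q, (min u v - u * v) / (g u * g v) := by
  rw [← integral_integral_comp_sub_sub (fun u v => (min u v - u * v) / (g u * g v)) 1]
  simp only [min_one_sub_sub_mul_one_sub]

lemma integral_integral_div_mul_rpow_one_add {p q : ℝ} (hp : 0 < p) (hpq : p ≤ q)
    (k : ℝ → ℝ → ℝ) (a s : ℝ) :
    ∫ u in p..q, ∫ v in p..q, k u v / (a * u ^ (1 + s) * (a * v ^ (1 + s))) =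
      a⁻¹ ^ 2 * ∫ u in p..q, ∫ v in p..q, k u v * v ^ (-1 - s) * u ^ (-1 - s) := by
  have hinv : ∀ u ∈ Set.uIcc p q, (a * u ^ (1 + s))⁻¹ = a⁻¹ * u ^ (-1 - s) := by
    intro u hu
    rw [Set.uIcc_of_le hpq] at hu
    rw [mul_inv, show -1 - s = -(1 + s) by ring, rpow_neg (hp.trans_le hu.1).le]
  rw [← intervalIntegral.integral_const_mul]
  refine integral_congr fun u hu => ?_
  simp only [← intervalIntegral.integral_const_mul]
  refine integral_congr fun v hv => ?_
  simp only [div_eq_mul_inv, mul_inv, hinv u hu, hinv v hv]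
  ring

section RpowShift
variable {x : ℝ}

lemma rpow_one_sub_eq_mul (hx : 0 < x) (s : ℝ) : x ^ (1 - s) = x * x ^ (-s) := by
  rw [sub_eq_neg_add, rpow_add_one hx.ne', mul_comm]

lemma rpow_neg_one_sub_eq_div (hx : 0 < x) (s : ℝ) : x ^ (-1 - s) = x ^ (-s) / x := by
  rw [show -1 - s = -s - 1 by ring, rpow_sub_one hx.ne']

lemma rpow_one_sub_two_mul_eq (hx : 0 < x) (s : ℝ) : x ^ (1 - 2 * s) = x * (x ^ (-s)) ^ 2 := by
  rw [show 1 - 2 * s = -s * 2 + 1 by ring, rpow_add_one hx.ne', rpow_mul hx.le, rpow_two, mul_comm]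

lemma rpow_two_sub_two_mul_eq (hx : 0 < x) (s : ℝ) : x ^ (2 - 2 * s) = (x * x ^ (-s)) ^ 2 := by
  rw [show 2 - 2 * s = (1 - s) * 2 by ring, rpow_mul hx.le, rpow_two, rpow_one_sub_eq_mul hx]

end RpowShift

section PowerIntegrals
variable {a b : ℝ}

lemma zero_notMem_uIcc_of_pos (ha : 0 < a) (hab : a ≤ b) : (0 : ℝ) ∉ Set.uIcc a b :=
  Set.notMem_uIcc_of_lt ha (ha.trans_le hab)

lemma integral_rpow_of_pos (ha : 0 < a) (hab : a ≤ b) {r : ℝ} (hr : r ≠ -1) :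
    ∫ x in a..b, x ^ r = (b ^ (r + 1) - a ^ (r + 1)) / (r + 1) :=
  integral_rpow (Or.inr ⟨hr, zero_notMem_uIcc_of_pos ha hab⟩)

lemma add_one_mul_integral_rpow (ha : 0 < a) (hab : a ≤ b) (r : ℝ) :
    (r + 1) * ∫ x in a..b, x ^ r = b ^ (r + 1) - a ^ (r + 1) := by
  by_cases hr : r = -1
  · simp [hr]
  · rw [integral_rpow_of_pos ha hab hr, mul_div_cancel₀]
    contrapose! hr
    linarith

lemma integral_rpow_neg_two_mul (ha : 0 < a) (hab : a ≤ b) (s : ℝ) :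
    ∫ x in a..b, x ^ (-2 * s) =
      if s = 1 / 2 then log (b / a) else (b ^ (1 - 2 * s) - a ^ (1 - 2 * s)) / (1 - 2 * s) := by
  split_ifs with hs
  · simp only [hs, show (-2 : ℝ) * (1 / 2) = -1 by norm_num, rpow_neg_one]
    exact integral_inv_of_pos ha (ha.trans_le hab)
  · rw [integral_rpow_of_pos ha hab, show -2 * s + 1 = 1 - 2 * s by ring]
    contrapose! hs
    linarith

lemma intervalIntegrable_rpow_of_pos (ha : 0 < a) (hab : a ≤ b) (r : ℝ) :
    IntervalIntegrable (fun x => x ^ r) volume a b :=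
  intervalIntegrable_rpow (Or.inr (zero_notMem_uIcc_of_pos ha hab))

end PowerIntegrals

lemma integral_min_sub_mul_mul_rpow {p q u ξ : ℝ} (hp : 0 < p) (hpu : p ≤ u) (huq : u ≤ q)
    (hξ0 : ξ ≠ 0) (hξ1 : ξ ≠ 1) :
    ∫ v in p..q, (min u v - u * v) * v ^ (-1 - ξ) =
      u ^ (1 - ξ) / (ξ * (1 - ξ)) - (1 - u) * p ^ (1 - ξ) / (1 - ξ) -
        u * (q ^ (-ξ) / ξ + q ^ (1 - ξ) / (1 - ξ)) := by
  have hu : 0 < u := hp.trans_le hpu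
  have hr₀ : -ξ ≠ -1 := by contrapose! hξ1; linarith
  have hr₁ : -1 - ξ ≠ -1 := by contrapose! hξ0; linarith
  have hint : ∀ {a b}, p ≤ a → a ≤ b →
      IntervalIntegrable (fun v => (min u v - u * v) * v ^ (-1 - ξ)) volume a b :=
    fun ha hab => (intervalIntegrable_rpow_of_pos (hp.trans_le ha) hab _).continuousOn_mul
      (by fun_prop)
  have hleft :
      ∫ v in p..u, (min u v - u * v) * v ^ (-1 - ξ) = (1 - u) * ∫ v in p..u, v ^ (-ξ) := by
    rw [← intervalIntegral.integral_const_mul]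
    refine integral_congr fun v hv => ?_
    rw [Set.uIcc_of_le hpu] at hv
    simp only [min_eq_right hv.2, rpow_neg_one_sub_eq_div (hp.trans_le hv.1)]
    field_simp [(hp.trans_le hv.1).ne']
  have hright : ∫ v in u..q, (min u v - u * v) * v ^ (-1 - ξ) =
      u * ((∫ v in u..q, v ^ (-1 - ξ)) - ∫ v in u..q, v ^ (-ξ)) := by
    rw [← integral_sub (intervalIntegrable_rpow_of_pos hu huq _)
      (intervalIntegrable_rpow_of_pos hu huq _), ← intervalIntegral.integral_const_mul]
    refine integral_congr fun v hv => ?_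
    rw [Set.uIcc_of_le huq] at hv
    simp only [min_eq_left hv.1, rpow_neg_one_sub_eq_div (hu.trans_le hv.1)]
    field_simp [(hu.trans_le hv.1).ne']
  rw [← integral_add_adjacent_intervals (hint le_rfl hpu) (hint hpu huq), hleft, hright,
    integral_rpow_of_pos hp hpu hr₀, integral_rpow_of_pos hu huq hr₀,
    integral_rpow_of_pos hu huq hr₁, show -ξ + 1 = 1 - ξ by ring, show -1 - ξ + 1 = -ξ by ring,
    rpow_one_sub_eq_mul hu]
  have h1ξ : 1 - ξ ≠ 0 := sub_ne_zero.mpr hξ1.symm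
  field_simp
  ring

lemma integral_integral_min_sub_mul_mul_rpow {p q ξ : ℝ} (hp : 0 < p) (hpq : p ≤ q)
    (hξ0 : ξ ≠ 0) (hξ1 : ξ ≠ 1) :
    ∫ u in p..q, ∫ v in p..q, (min u v - u * v) * v ^ (-1 - ξ) * u ^ (-1 - ξ) =
      2 / (1 - ξ) * ((∫ v in p..q, v ^ (-2 * ξ)) + p ^ (1 - ξ) * (q ^ (-ξ) - p ^ (-ξ)) / ξ +
        (2 * p ^ (1 - ξ) * q ^ (1 - ξ) - p ^ (2 - 2 * ξ) - q ^ (2 - 2 * ξ)) / (2 - 2 * ξ)) := by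
  have h1ξ : 1 - ξ ≠ 0 := sub_ne_zero.mpr hξ1.symm
  set C₀ := p ^ (1 - ξ) / (1 - ξ) with hC₀
  set C₁ := q ^ (-ξ) / ξ + q ^ (1 - ξ) / (1 - ξ) with hC₁
  have hinner : Set.EqOn (fun u => ∫ v in p..q, (min u v - u * v) * v ^ (-1 - ξ) * u ^ (-1 - ξ))
      (fun u => 1 / (ξ * (1 - ξ)) * u ^ (-2 * ξ) + (C₀ - C₁) * u ^ (-ξ) - C₀ * u ^ (-1 - ξ))
      (Set.uIcc p q) := by
    intro u hu
    rw [Set.uIcc_of_le hpq] at hu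
    have hu0 : 0 < u := hp.trans_le hu.1
    simp only [intervalIntegral.integral_mul_const,
      integral_min_sub_mul_mul_rpow hp hu.1 hu.2 hξ0 hξ1]
    rw [rpow_one_sub_eq_mul hu0, rpow_neg_one_sub_eq_div hu0, show -2 * ξ = -ξ * 2 by ring,
      rpow_mul hu0.le, rpow_two, hC₀, hC₁]
    field_simp
    ring
  have hint := intervalIntegrable_rpow_of_pos hp hpq
  rw [integral_congr hinner, integral_sub ((hint _).const_mul _ |>.add ((hint _).const_mul _))
    ((hint _).const_mul _), integral_add ((hint _).const_mul _) ((hint _).const_mul _),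
    intervalIntegral.integral_const_mul, intervalIntegral.integral_const_mul,
    intervalIntegral.integral_const_mul,
    integral_rpow_of_pos (r := -ξ) hp hpq (by contrapose! hξ1; linarith),
    integral_rpow_of_pos (r := -1 - ξ) hp hpq (by contrapose! hξ0; linarith)]
  linear_combination (norm := skip)
    1 / (ξ * (1 - ξ)) * add_one_mul_integral_rpow hp hpq (-2 * ξ)
  rw [hC₀, hC₁, show -ξ + 1 = 1 - ξ by ring, show -1 - ξ + 1 = -ξ by ring,
    show -2 * ξ + 1 = 1 - 2 * ξ by ring,
    rpow_one_sub_eq_mul hp, rpow_one_sub_eq_mul (hp.trans_le hpq), rpow_two_sub_two_mul_eq hp,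
    rpow_two_sub_two_mul_eq (hp.trans_le hpq), rpow_one_sub_two_mul_eq hp,
    rpow_one_sub_two_mul_eq (hp.trans_le hpq)]
  field_simp
  ring

theorem stmt1_general (α c ξ p q : ℝ) (hα : 1 < α) (hξ : ξ = 1 / α)
    (hp : 0 < p) (hpq : p < q) (hq : q ≤ 1) :
    (∫ x₁ in (0:ℝ)..1, ∫ x₂ in (0:ℝ)..1,
        ((if 1 - q < x₁ ∧ x₁ ≤ 1 - p then (1:ℝ) else 0) *
            (if 1 - q < x₂ ∧ x₂ ≤ 1 - p then (1:ℝ) else 0) /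
          ((α / c * (1 - x₁) ^ (1 + 1 / α)) * (α / c * (1 - x₂) ^ (1 + 1 / α)))) *
          (min x₁ x₂ - x₁ * x₂))
      = 2 * c ^ 2 * ξ ^ 2 / (1 - ξ) *
          ((if ξ = 1 / 2 then Real.log (q / p)
              else (q ^ (1 - 2 * ξ) - p ^ (1 - 2 * ξ)) / (1 - 2 * ξ)) +
            p ^ (1 - ξ) * (q ^ (-ξ) - p ^ (-ξ)) / ξ +
            (2 * p ^ (1 - ξ) * q ^ (1 - ξ) - p ^ (2 - 2 * ξ) - q ^ (2 - 2 * ξ)) /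
              (2 - 2 * ξ)) := by
  have hξ0 : ξ ≠ 0 := by rw [hξ]; positivity
  have hξ1 : ξ ≠ 1 := by rw [hξ]; exact (div_lt_one (by linarith)).mpr hα |>.ne
  have hweight : (α / c)⁻¹ = c * ξ := by rw [inv_div, hξ, mul_one_div]
  have hshape : ∀ i j w k : ℝ, i * j / w * k = i * j * (k / w) := fun _ _ _ _ => by ring
  simp only [hshape]
  rw [integral_integral_ite_Ioc_mul (by linarith) (by linarith) (by linarith),
    integral_integral_min_sub_mul_div_comp_one_sub (fun u => α / c * u ^ (1 + 1 / α)),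
    integral_integral_div_mul_rpow_one_add hp hpq.le, ← hξ,
    integral_integral_min_sub_mul_mul_rpow hp hpq.le hξ0 hξ1,
    integral_rpow_neg_two_mul hp hpq.le, hweight]
  ring

/-- For the Pareto(α,c) distribution, with `f(F⁻¹(x)) = (α/c)(1−x)^(1+1/α)`
and `J(x) = 1[1−q < x ≤ 1−p]`, the double integral
`∫₀¹∫₀¹ [J(x₁)J(x₂)/(f(F⁻¹(x₁)) f(F⁻¹(x₂)))] (min{x₁,x₂} − x₁x₂) dx₁ dx₂`
equals the explicit expression `σ²(p,q)` in the paper, where `ξ = 1/α`. -/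
theorem stmt1 (α c ξ p q : ℝ) (hα : 1 < α) (hc : 0 < c) (hξ : ξ = 1 / α)
    (hp : 0 < p) (hpq : p < q) (hq : q ≤ 1) :
    (∫ x₁ in (0:ℝ)..1, ∫ x₂ in (0:ℝ)..1,
        ((if 1 - q < x₁ ∧ x₁ ≤ 1 - p then (1:ℝ) else 0) *
            (if 1 - q < x₂ ∧ x₂ ≤ 1 - p then (1:ℝ) else 0) /
          ((α / c * (1 - x₁) ^ (1 + 1 / α)) * (α / c * (1 - x₂) ^ (1 + 1 / α)))) *
          (min x₁ x₂ - x₁ * x₂))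
      = 2 * c ^ 2 * ξ ^ 2 / (1 - ξ) *
          ((if ξ = 1 / 2 then Real.log (q / p)
              else (q ^ (1 - 2 * ξ) - p ^ (1 - 2 * ξ)) / (1 - 2 * ξ)) +
            p ^ (1 - ξ) * (q ^ (-ξ) - p ^ (-ξ)) / ξ +
            (2 * p ^ (1 - ξ) * q ^ (1 - ξ) - p ^ (2 - 2 * ξ) - q ^ (2 - 2 * ξ)) /
              (2 - 2 * ξ)) :=
  stmt1_general α c ξ p q hα hξ hp hpq hq
end

section
/- Let c > 0, ξ ∈ (0,1), K ≥ 1, and 0 < p_1 < ⋯ < p_{K+1} ≤ 1. Then the symmetric K×K matrix Σ defined by Σ_{kk} = σ²(p_k, p_{k+1}) and Σ_{jk} = Σ_{kj} = −c²ξ² [(p_{j+1}^(1−ξ) − p_j^(1−ξ))/(1−ξ)] [ (p_{k+1}^(−ξ) − p_k^(−ξ))/ξ + (p_{k+1}^(1−ξ) − p_k^(1−ξ))/(1−ξ) ] for j < k is positive definite. -/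
open Real

/-- `T(p,q)`, equal to `(q^(1−2ξ) − p^(1−2ξ))/(1−2ξ)` if `ξ ≠ 1/2` and `log(q/p)` if `ξ = 1/2`. -/
noncomputable def TPQ (ξ p q : ℝ) : ℝ :=
  if ξ = 1 / 2 then Real.log (q / p) else (q ^ (1 - 2 * ξ) - p ^ (1 - 2 * ξ)) / (1 - 2 * ξ)

/-- `σ²(p,q)` from the paper's Lemma 2. -/
noncomputable def sigma2PQ (c ξ p q : ℝ) : ℝ :=
  2 * c ^ 2 * ξ ^ 2 / (1 - ξ) *
    (TPQ ξ p q + p ^ (1 - ξ) * (q ^ (-ξ) - p ^ (-ξ)) / ξ +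
      (2 * p ^ (1 - ξ) * q ^ (1 - ξ) - p ^ (2 - 2 * ξ) - q ^ (2 - 2 * ξ)) / (2 - 2 * ξ))

/-- Off-diagonal covariance term (0-based indices: paper `p_j` is `p (j+1)`). -/
noncomputable def offDiag (c ξ : ℝ) (p : ℕ → ℝ) (j k : ℕ) : ℝ :=
  -(c ^ 2) * ξ ^ 2 * ((p (j + 2) ^ (1 - ξ) - p (j + 1) ^ (1 - ξ)) / (1 - ξ)) *
    ((p (k + 2) ^ (-ξ) - p (k + 1) ^ (-ξ)) / ξ +
      (p (k + 2) ^ (1 - ξ) - p (k + 1) ^ (1 - ξ)) / (1 - ξ))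

/-- The symmetric covariance matrix `Σ` (Lean index `k : Fin K` is paper index `k+1`). -/
noncomputable def SigmaMat (c ξ : ℝ) (K : ℕ) (p : ℕ → ℝ) : Matrix (Fin K) (Fin K) ℝ :=
  fun j k =>
    if j = k then sigma2PQ c ξ (p ((j : ℕ) + 1)) (p ((j : ℕ) + 2))
    else if (j : ℕ) < (k : ℕ) then offDiag c ξ p j k else offDiag c ξ p k j

/-!
Write `I_k = [p (k+1), p (k+2)]` for `k < K` (indices as in `SigmaMat`). For a Brownian bridge
`B`, `Σ / c²` is the covariance matrix of the variables `ξ ∫_{I_k} s^(-ξ-1) B_s ds`.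
Equivalently, `zᵀ Σ z = c² Var(ξ F(U))` for `U` uniform on `[0, 1]`, where `F = ∑ z_k F_k` and
`F_k(u) = ∫_u^1 1_{I_k}(s) s^(-ξ-1) ds`. Split this variance over the pieces
`[0, p 1], I_0, …, I_{K-1}, [p (K+1), 1]` (law of total variance). The between-piece part is a
Gram matrix of centred piece means, so it is positive semidefinite. On `I_k` only the summand
`z_k u^(-ξ)` of `ξ F` varies, so the within-piece part is the diagonal form
`∑ z_k² (T - A² / Δ)`, where `Δ` is the length of `I_k`, `A = ∫ u^(-ξ)` and `T = ∫ u^(-2ξ)`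
over it. Strict Cauchy–Schwarz `A² < Δ T` makes this diagonal positive definite.
-/

open Finset Matrix

section CauchySchwarz

variable {ξ p q : ℝ}

lemma continuousOn_rpow_const_Icc (r : ℝ) (hp : 0 < p) :
    ContinuousOn (fun s : ℝ => s ^ r) (Set.Icc p q) := fun s hs =>
  (Real.continuousAt_rpow_const s r (Or.inl (hp.trans_le hs.1).ne')).continuousWithinAt

lemma integral_rpow_neg (hξ : ξ ≠ 1) (hp : 0 < p) (hpq : p ≤ q) :
    ∫ s in p..q, s ^ (-ξ) = (q ^ (1 - ξ) - p ^ (1 - ξ)) / (1 - ξ) := by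
  have h0 : (0 : ℝ) ∉ Set.uIcc p q := by
    rw [Set.uIcc_of_le hpq]; exact fun h => hp.not_ge h.1
  rw [integral_rpow (Or.inr ⟨by contrapose! hξ; linarith, h0⟩), neg_add_eq_sub]

lemma integral_rpow_neg_sq (hp : 0 < p) (hpq : p ≤ q) :
    ∫ s in p..q, (s ^ (-ξ)) ^ 2 = TPQ ξ p q := by
  have h0 : (0 : ℝ) ∉ Set.uIcc p q := by
    rw [Set.uIcc_of_le hpq]; exact fun h => hp.not_ge h.1
  have hsq : Set.EqOn (fun s : ℝ => (s ^ (-ξ)) ^ 2) (fun s => s ^ (-2 * ξ)) (Set.uIcc p q) := by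
    intro s hs
    rw [Set.uIcc_of_le hpq] at hs
    simp only [← Real.rpow_mul_natCast (hp.trans_le hs.1).le]
    ring_nf
  rw [intervalIntegral.integral_congr hsq, TPQ]
  split_ifs with hξ
  · subst hξ
    norm_num [Real.rpow_neg_one, integral_inv h0]
  · rw [integral_rpow (Or.inr ⟨by contrapose! hξ; linarith, h0⟩)]
    ring_nf

theorem sq_integral_rpow_neg_lt (hξ0 : ξ ≠ 0) (hξ1 : ξ ≠ 1) (hp : 0 < p) (hpq : p < q) :
    ((q ^ (1 - ξ) - p ^ (1 - ξ)) / (1 - ξ)) ^ 2 < (q - p) * TPQ ξ p q := by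
  set A := (q ^ (1 - ξ) - p ^ (1 - ξ)) / (1 - ξ)
  set μ := A / (q - p)
  have hcont := continuousOn_rpow_const_Icc (q := q) (-ξ) hp
  have hint := hcont.intervalIntegrable_of_Icc (μ := MeasureTheory.volume) hpq.le
  have hint2 : IntervalIntegrable (fun s : ℝ => (s ^ (-ξ)) ^ 2) MeasureTheory.volume p q :=
    (hcont.pow 2).intervalIntegrable_of_Icc hpq.le
  have hvar : ∫ s in p..q, (s ^ (-ξ) - μ) ^ 2 = TPQ ξ p q - 2 * μ * A + μ ^ 2 * (q - p) := by
    have hexpand : ∀ s : ℝ,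
        (s ^ (-ξ) - μ) ^ 2 = ((s ^ (-ξ)) ^ 2 - 2 * μ * s ^ (-ξ)) + μ ^ 2 := fun s => by ring
    simp only [hexpand]
    rw [intervalIntegral.integral_add (hint2.sub (hint.const_mul _)) intervalIntegrable_const,
      intervalIntegral.integral_sub hint2 (hint.const_mul _), intervalIntegral.integral_const_mul,
      integral_rpow_neg hξ1 hp hpq.le, integral_rpow_neg_sq hp hpq.le,
      intervalIntegral.integral_const, smul_eq_mul]
    ring
  have hpos : 0 < ∫ s in p..q, (s ^ (-ξ) - μ) ^ 2 := by
    refine intervalIntegral.integral_pos hpq ((hcont.sub continuousOn_const).pow 2)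
      (fun s _ => sq_nonneg _) ?_
    have hne : p ^ (-ξ) ≠ q ^ (-ξ) := fun h =>
      hpq.ne (Real.rpow_left_injOn (neg_ne_zero.mpr hξ0) hp.le (hp.trans hpq).le h)
    by_cases hμ : p ^ (-ξ) = μ
    · exact ⟨q, Set.right_mem_Icc.mpr hpq.le,
        sq_pos_of_ne_zero (sub_ne_zero.mpr (hμ ▸ hne.symm))⟩
    · exact ⟨p, Set.left_mem_Icc.mpr hpq.le, sq_pos_of_ne_zero (sub_ne_zero.mpr hμ)⟩
  have hμA : μ * (q - p) = A := div_mul_cancel₀ A (sub_pos.mpr hpq).ne'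
  have hgap : (q - p) * TPQ ξ p q - A ^ 2 = (q - p) * ∫ s in p..q, (s ^ (-ξ) - μ) ^ 2 := by
    rw [hvar, ← hμA]
    ring
  linarith [mul_pos (sub_pos.mpr hpq) hpos]

end CauchySchwarz

section RpowIdentities

variable {ξ t : ℝ}

lemma rpow_one_sub_eq_mul_s5 (ht : 0 < t) : t ^ (1 - ξ) = t * t ^ (-ξ) := by
  rw [sub_eq_add_neg, Real.rpow_add ht, Real.rpow_one]

lemma rpow_two_sub_two_mul_eq_sq (ht : 0 < t) : t ^ (2 - 2 * ξ) = (t * t ^ (-ξ)) ^ 2 := by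
  rw [← rpow_one_sub_eq_mul_s5 ht, ← Real.rpow_mul_natCast ht.le]
  ring_nf

lemma rpow_one_sub_two_mul_eq_s5 (ht : 0 < t) : t ^ (1 - 2 * ξ) = t * (t ^ (-ξ)) ^ 2 := by
  rw [← Real.rpow_mul_natCast ht.le, show 1 - 2 * ξ = 1 + -ξ * (2 : ℕ) by push_cast; ring,
    Real.rpow_add ht, Real.rpow_one]

end RpowIdentities

-- Valid also at `ξ = 1 / 2` (both sides vanish), which spares the entry identities a case split.
lemma one_sub_two_mul_mul_TPQ {ξ p q : ℝ} (hp : 0 < p) (hq : 0 < q) :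
    (1 - 2 * ξ) * TPQ ξ p q = q * (q ^ (-ξ)) ^ 2 - p * (p ^ (-ξ)) ^ 2 := by
  rw [← rpow_one_sub_two_mul_eq_s5 hp, ← rpow_one_sub_two_mul_eq_s5 hq, TPQ]
  split_ifs with hξ
  · simp [hξ]
  · field_simp [sub_ne_zero.mpr (show (1 : ℝ) ≠ 2 * ξ by contrapose! hξ; linarith)]

lemma sum_range_sub_mul_of_const_of_zero {p f : ℕ → ℝ} {k K : ℕ} {α : ℝ} (hk : k < K)
    (hlt : ∀ m < k, f m = α) (hgt : ∀ m, k < m → f m = 0) :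
    ∑ m ∈ range K, (p (m + 2) - p (m + 1)) * f m
      = (p (k + 1) - p 1) * α + (p (k + 2) - p (k + 1)) * f k := by
  rw [← sum_range_add_sum_Ico _ hk.le, sum_eq_sum_Ico_succ_bot hk,
    sum_congr rfl fun m hm => by rw [hlt m (mem_range.mp hm)],
    sum_eq_zero (s := Ico (k + 1) K) fun m hm => by rw [hgt m (mem_Ico.mp hm).1, mul_zero],
    ← sum_mul, sum_range_sub (fun i => p (i + 1))]
  ring

section Gram

variable (ξ : ℝ) (p : ℕ → ℝ)

/-- `∫_{I_k} s^(-ξ) ds`, which is also `∫_0^1 F_k`. -/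
noncomputable def rpowIntegral (k : ℕ) : ℝ :=
  (p (k + 2) ^ (1 - ξ) - p (k + 1) ^ (1 - ξ)) / (1 - ξ)

noncomputable def rpowJump (k : ℕ) : ℝ := p (k + 1) ^ (-ξ) - p (k + 2) ^ (-ξ)

/-- The mean of `ξ F_k` over `I_m`. Over `[0, p 1]` it is `rpowJump ξ p k`, over
`[p (K+1), 1]` it is `0`. -/
noncomputable def pieceMean (m k : ℕ) : ℝ :=
  if m < k then rpowJump ξ p k
  else if m = k then rpowIntegral ξ p k / (p (k + 2) - p (k + 1)) - p (k + 2) ^ (-ξ) else 0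

noncomputable def centered {K : ℕ} (f : ℕ → ℝ) (k : Fin K) : ℝ :=
  f k - ξ * rpowIntegral ξ p k

noncomputable def betweenGram (K : ℕ) : Matrix (Fin K) (Fin K) ℝ :=
  p 1 • vecMulVec (centered ξ p (rpowJump ξ p)) (centered ξ p (rpowJump ξ p))
    + (1 - p (K + 1)) • vecMulVec (centered ξ p 0) (centered ξ p 0)
    + ∑ m : Fin K, (p (m + 2) - p (m + 1)) •
        vecMulVec (centered ξ p (pieceMean ξ p m)) (centered ξ p (pieceMean ξ p m))

noncomputable def withinVar (k : ℕ) : ℝ :=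
  TPQ ξ (p (k + 1)) (p (k + 2)) - rpowIntegral ξ p k ^ 2 / (p (k + 2) - p (k + 1))

variable {ξ p}

lemma sum_range_mul_pieceMean {k K : ℕ} (hk : k < K) :
    ∑ m ∈ range K, (p (m + 2) - p (m + 1)) * pieceMean ξ p m k
      = (p (k + 1) - p 1) * rpowJump ξ p k + (p (k + 2) - p (k + 1)) * pieceMean ξ p k k :=
  sum_range_sub_mul_of_const_of_zero hk (fun m hm => if_pos hm)
    (fun m hm => by rw [pieceMean, if_neg (by omega), if_neg (by omega)])

lemma sum_range_mul_pieceMean_mul {j k K : ℕ} (hjk : j ≤ k) (hk : k < K) :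
    ∑ m ∈ range K, (p (m + 2) - p (m + 1)) * (pieceMean ξ p m j * pieceMean ξ p m k)
      = (p (j + 1) - p 1) * (rpowJump ξ p j * rpowJump ξ p k)
        + (p (j + 2) - p (j + 1)) * (pieceMean ξ p j j * pieceMean ξ p j k) :=
  sum_range_sub_mul_of_const_of_zero (hjk.trans_lt hk)
    (fun m hm => by rw [pieceMean, pieceMean, if_pos hm, if_pos (by omega)])
    (fun m hm => by rw [pieceMean, if_neg (by omega), if_neg (by omega), zero_mul])

lemma betweenGram_apply_of_le {K : ℕ} {j k : Fin K} (hjk : (j : ℕ) ≤ k) :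
    betweenGram ξ p K j k
      = p 1 * (rpowJump ξ p j - ξ * rpowIntegral ξ p j)
          * (rpowJump ξ p k - ξ * rpowIntegral ξ p k)
        + (1 - p 1) * (ξ * rpowIntegral ξ p j) * (ξ * rpowIntegral ξ p k)
        + ((p (j + 1) - p 1) * (rpowJump ξ p j * rpowJump ξ p k)
          + (p (j + 2) - p (j + 1)) * (pieceMean ξ p j j * pieceMean ξ p j k))
        - ξ * rpowIntegral ξ p j
          * ((p (k + 1) - p 1) * rpowJump ξ p k + (p (k + 2) - p (k + 1)) * pieceMean ξ p k k)
        - ξ * rpowIntegral ξ p k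
          * ((p (j + 1) - p 1) * rpowJump ξ p j
            + (p (j + 2) - p (j + 1)) * pieceMean ξ p j j) := by
  have hsum := Fin.sum_univ_eq_sum_range (fun m => (p (m + 2) - p (m + 1)) *
    ((pieceMean ξ p m j - ξ * rpowIntegral ξ p j) *
      (pieceMean ξ p m k - ξ * rpowIntegral ξ p k))) K
  simp only [betweenGram, Matrix.add_apply, Matrix.smul_apply, Matrix.sum_apply,
    vecMulVec_apply, centered, smul_eq_mul, Pi.zero_apply, hsum]
  have hexpand : ∀ m, (p (m + 2) - p (m + 1)) *
      ((pieceMean ξ p m j - ξ * rpowIntegral ξ p j) *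
        (pieceMean ξ p m k - ξ * rpowIntegral ξ p k))
      = (p (m + 2) - p (m + 1)) * (pieceMean ξ p m j * pieceMean ξ p m k)
        - ξ * rpowIntegral ξ p j * ((p (m + 2) - p (m + 1)) * pieceMean ξ p m k)
        - ξ * rpowIntegral ξ p k * ((p (m + 2) - p (m + 1)) * pieceMean ξ p m j)
        + ξ * rpowIntegral ξ p j * (ξ * rpowIntegral ξ p k) * (p (m + 2) - p (m + 1)) :=
    fun m => by ring
  simp only [hexpand, sum_add_distrib, sum_sub_distrib, ← mul_sum,
    sum_range_mul_pieceMean_mul hjk k.isLt, sum_range_mul_pieceMean k.isLt,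
    sum_range_mul_pieceMean j.isLt, sum_range_sub (fun i => p (i + 1))]
  ring

lemma betweenGram_comm {K : ℕ} (j k : Fin K) :
    betweenGram ξ p K j k = betweenGram ξ p K k j := by
  simp only [betweenGram, Matrix.add_apply, Matrix.smul_apply, Matrix.sum_apply,
    vecMulVec_apply, mul_comm]

end Gram

section Entries

variable {c ξ : ℝ} {p : ℕ → ℝ} {K : ℕ}

lemma pos_of_lt_succ (hp0 : 0 < p 1) (hp : ∀ m < K, p (m + 1) < p (m + 2)) :
    ∀ m ≤ K, 0 < p (m + 1)
  | 0, _ => hp0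
  | m + 1, hm => (pos_of_lt_succ hp0 hp m (by omega)).trans (hp m hm)

lemma offDiag_eq_betweenGram (hξ0 : ξ ≠ 0) (hξ1 : ξ ≠ 1) (hp0 : 0 < p 1)
    (hp : ∀ m < K, p (m + 1) < p (m + 2)) {j k : Fin K} (hjk : (j : ℕ) < k) :
    _root_.offDiag c ξ p j k = c ^ 2 * betweenGram ξ p K j k := by
  have hpos := pos_of_lt_succ hp0 hp
  have hΔj := sub_ne_zero.mpr (hp j j.isLt).ne'
  have hΔk := sub_ne_zero.mpr (hp k k.isLt).ne'
  have h1ξ : 1 - ξ ≠ 0 := sub_ne_zero.mpr (Ne.symm hξ1)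
  rw [betweenGram_apply_of_le hjk.le]
  simp only [pieceMean, if_pos hjk, lt_irrefl, if_false, if_true, _root_.offDiag, rpowIntegral,
    rpowJump, rpow_one_sub_eq_mul_s5 (hpos j j.isLt.le), rpow_one_sub_eq_mul_s5 (hpos (j + 1) j.isLt),
    rpow_one_sub_eq_mul_s5 (hpos k k.isLt.le), rpow_one_sub_eq_mul_s5 (hpos (k + 1) k.isLt)]
  field_simp
  ring

lemma sigma2PQ_eq_betweenGram_add_withinVar (hξ0 : ξ ≠ 0) (hξ1 : ξ ≠ 1) (hp0 : 0 < p 1)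
    (hp : ∀ m < K, p (m + 1) < p (m + 2)) (j : Fin K) :
    sigma2PQ c ξ (p (j + 1)) (p (j + 2))
      = c ^ 2 * (betweenGram ξ p K j j + withinVar ξ p j) := by
  have hpos := pos_of_lt_succ hp0 hp
  have hΔ := sub_ne_zero.mpr (hp j j.isLt).ne'
  have h1ξ : 1 - ξ ≠ 0 := sub_ne_zero.mpr (Ne.symm hξ1)
  have hT := one_sub_two_mul_mul_TPQ (ξ := ξ) (hpos j j.isLt.le) (hpos (j + 1) j.isLt)
  rw [betweenGram_apply_of_le le_rfl]
  simp only [pieceMean, withinVar, lt_irrefl, if_false, if_true, sigma2PQ, rpowIntegral,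
    rpowJump, rpow_two_sub_two_mul_eq_sq (hpos j j.isLt.le),
    rpow_two_sub_two_mul_eq_sq (hpos (j + 1) j.isLt),
    rpow_one_sub_eq_mul_s5 (hpos j j.isLt.le), rpow_one_sub_eq_mul_s5 (hpos (j + 1) j.isLt)]
  linear_combination (norm := skip) (-c ^ 2 * (1 + ξ) / (1 - ξ)) * hT
  field_simp
  ring

lemma sigmaMat_eq_smul (hξ0 : ξ ≠ 0) (hξ1 : ξ ≠ 1) (hp0 : 0 < p 1)
    (hp : ∀ m < K, p (m + 1) < p (m + 2)) :
    SigmaMat c ξ K p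
      = c ^ 2 • (betweenGram ξ p K + diagonal fun k : Fin K => withinVar ξ p k) := by
  ext j k
  simp only [SigmaMat, Matrix.smul_apply, Matrix.add_apply, diagonal_apply, smul_eq_mul]
  rcases lt_trichotomy (j : ℕ) k with hjk | hjk | hjk
  · rw [if_neg (Fin.ne_of_lt hjk), if_pos hjk, if_neg (Fin.ne_of_lt hjk), add_zero,
      offDiag_eq_betweenGram hξ0 hξ1 hp0 hp hjk]
  · obtain rfl := Fin.ext hjk
    rw [if_pos rfl, if_pos rfl, sigma2PQ_eq_betweenGram_add_withinVar hξ0 hξ1 hp0 hp]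
  · rw [if_neg (Fin.ne_of_gt hjk), if_neg hjk.not_gt, if_neg (Fin.ne_of_gt hjk), add_zero,
      offDiag_eq_betweenGram hξ0 hξ1 hp0 hp hjk, betweenGram_comm]

end Entries

section PosDef

variable {c ξ : ℝ} {p : ℕ → ℝ} {K : ℕ}

lemma withinVar_pos (hξ0 : ξ ≠ 0) (hξ1 : ξ ≠ 1) {k : ℕ} (hp : 0 < p (k + 1))
    (hlt : p (k + 1) < p (k + 2)) : 0 < withinVar ξ p k := by
  rw [withinVar, sub_pos, div_lt_iff₀ (sub_pos.mpr hlt), mul_comm]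
  exact sq_integral_rpow_neg_lt hξ0 hξ1 hp hlt

lemma betweenGram_posSemidef (hp0 : 0 ≤ p 1) (hp1 : p (K + 1) ≤ 1)
    (hp : ∀ m < K, p (m + 1) ≤ p (m + 2)) : (betweenGram ξ p K).PosSemidef := by
  have hsq : ∀ u : Fin K → ℝ, (vecMulVec u u).PosSemidef := fun u => by
    simpa using posSemidef_vecMulVec_self_star u
  refine ((hsq _).smul hp0).add ((hsq _).smul (sub_nonneg.mpr hp1)) |>.add ?_
  exact posSemidef_sum _ fun m _ => (hsq _).smul (sub_nonneg.mpr (hp m m.isLt))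

theorem posDef_sigmaMat (hc : c ≠ 0) (hξ0 : ξ ≠ 0) (hξ1 : ξ ≠ 1) (hp0 : 0 < p 1)
    (hp : ∀ m < K, p (m + 1) < p (m + 2)) (hp1 : p (K + 1) ≤ 1) :
    (SigmaMat c ξ K p).PosDef := by
  have hpos := pos_of_lt_succ hp0 hp
  rw [sigmaMat_eq_smul hξ0 hξ1 hp0 hp]
  refine PosDef.smul ?_ (by positivity)
  exact PosDef.posSemidef_add (betweenGram_posSemidef hp0.le hp1 fun m hm => (hp m hm).le)
    (PosDef.diagonal fun k => withinVar_pos hξ0 hξ1 (hpos k k.isLt.le) (hp k k.isLt))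

end PosDef

theorem stmt5_general (c ξ : ℝ) (K : ℕ) (hc : 0 < c) (hξ0 : 0 < ξ) (hξ1 : ξ < 1)
    (p : ℕ → ℝ) (hp0 : 0 < p 1) (hpmono : ∀ k, 1 ≤ k → k ≤ K → p k < p (k + 1))
    (hp1 : p (K + 1) ≤ 1) :
    ∀ z : Fin K → ℝ, z ≠ 0 → 0 < ∑ j, ∑ k, z j * SigmaMat c ξ K p j k * z k := by
  intro z hz
  have hpd := posDef_sigmaMat hc.ne' hξ0.ne' hξ1.ne hp0
    (fun m hm => hpmono (m + 1) (by omega) hm) hp1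
  simpa [dotProduct, mulVec, mul_sum, mul_assoc] using hpd.dotProduct_mulVec_pos hz

/-- The covariance matrix `Σ` is positive definite:
`zᵀ Σ z > 0` for every nonzero `z ∈ ℝ^K`. -/
theorem stmt5 (c ξ : ℝ) (K : ℕ) (hc : 0 < c) (hξ0 : 0 < ξ) (hξ1 : ξ < 1) (hK : 1 ≤ K)
    (p : ℕ → ℝ) (hp0 : 0 < p 1) (hpmono : ∀ k, 1 ≤ k → k ≤ K → p k < p (k + 1))
    (hp1 : p (K + 1) ≤ 1) :
    ∀ z : Fin K → ℝ, z ≠ 0 → 0 < ∑ j, ∑ k, z j * SigmaMat c ξ K p j k * z k :=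
  stmt5_general c ξ K hc hξ0 hξ1 p hp0 hpmono hp1
end

section
/- Let c > 0, ξ ∈ (0,1), K ≥ 1, 0 < p_1 < ⋯ < p_{K+1} ≤ 1, and z ∈ ℝ^K. For k = 1,…,K define φ_k(v) = c ξ v^(−ξ) 1[p_k ≤ v < p_{k+1}], let φ(v) = Σ_{k=1}^K z_k φ_k(v), and let Φ(v) = ∫_{p_1}^{v} φ(u) du. Then ∫_{[p_1,1]²} φ(v₁) φ(v₂) [ (min{1−v₁, 1−v₂} − (1−v₁)(1−v₂)) / (v₁ v₂) ] dv₁ dv₂ = ∫_{p_1}^{1} Φ(v)² / v² dv. -/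
/-!
For `v₁, v₂ > 0` the kernel equals `g (max v₁ v₂)` with `g t = t⁻¹ - 1`. For integrable `f` with
primitive `F` (`F a = 0`) and absolutely continuous `g` vanishing at `b`, splitting the inner
integral at `x` gives `∫ f x (F x g x + ∫ y in x..b, f y g y)`, and an integration by parts turns
the second half into the first, so the double integral is `2 ∫ F f g`. Integrating `F² g'` by parts
gives `-∫ F² g' = 2 ∫ F f g`, and here `-g' t = t⁻²`.
-/

open MeasureTheory intervalIntegral Real Set
open scoped Interval

section

variable {f g h : ℝ → ℝ} {a b c : ℝ}

lemma IntervalIntegrable.ae_hasDerivAt_primitive (hf : IntervalIntegrable f volume a b)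
    (hc : c ∈ uIcc a b) :
    ∀ᵐ x, x ∈ Ι a b → HasDerivAt (fun x ↦ ∫ t in c..x, f t) (f x) x := by
  filter_upwards [hf.ae_hasDerivAt_integral] with x hx hxab
  exact hx (uIoc_subset_uIcc hxab) c hc

lemma integral_mul_integral_tail_eq_integral_primitive_mul (hf : IntervalIntegrable f volume a b)
    (hh : IntervalIntegrable h volume a b) :
    ∫ x in a..b, f x * ∫ y in x..b, h y = ∫ x in a..b, (∫ y in a..x, f y) * h x := by
  have parts := (hh.absolutelyContinuousOnInterval_intervalIntegral right_mem_uIcc)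
    |>.integral_mul_deriv_eq_deriv_mul
      (hf.absolutelyContinuousOnInterval_intervalIntegral left_mem_uIcc)
  simp only [integral_same, zero_mul, mul_zero, sub_zero, zero_sub] at parts
  have hF : ∫ x in a..b, (∫ y in b..x, h y) * deriv (fun x ↦ ∫ y in a..x, f y) x
      = -∫ x in a..b, f x * ∫ y in x..b, h y := by
    rw [← intervalIntegral.integral_neg]
    refine integral_congr_ae ?_
    filter_upwards [hf.ae_hasDerivAt_primitive left_mem_uIcc] with x hx hxab
    rw [(hx hxab).deriv, integral_symm x b]
    ring
  have hH : ∫ x in a..b, deriv (fun x ↦ ∫ y in b..x, h y) x * (∫ y in a..x, f y)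
      = ∫ x in a..b, (∫ y in a..x, f y) * h x := by
    refine integral_congr_ae ?_
    filter_upwards [hh.ae_hasDerivAt_primitive right_mem_uIcc] with x hx hxab
    rw [(hx hxab).deriv, mul_comm]
  rw [hF, hH] at parts
  linarith

lemma integral_sq_primitive_mul_deriv_eq (hf : IntervalIntegrable f volume a b)
    (hg : AbsolutelyContinuousOnInterval g a b) (hgb : g b = 0) :
    ∫ x in a..b, (∫ t in a..x, f t) ^ 2 * deriv g x
      = -(2 * ∫ x in a..b, (∫ t in a..x, f t) * (f x * g x)) := by
  have hF := hf.absolutelyContinuousOnInterval_intervalIntegral left_mem_uIcc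
  have parts := (hF.fun_mul hF).integral_mul_deriv_eq_deriv_mul hg
  simp only [integral_same, zero_mul, hgb, mul_zero, sub_zero, zero_sub] at parts
  simp only [sq, parts]
  rw [← intervalIntegral.integral_const_mul]
  congr 1
  refine integral_congr_ae ?_
  filter_upwards [hf.ae_hasDerivAt_primitive left_mem_uIcc] with x hx hxab
  rw [((hx hxab).fun_mul (hx hxab)).deriv]
  ring

lemma integral_mul_comp_max_eq {x : ℝ} (hf : IntervalIntegrable f volume a b)
    (hg : ContinuousOn g (Icc a b)) (hx : x ∈ Icc a b) :
    ∫ y in a..b, f y * g (max x y) = (∫ y in a..x, f y) * g x + ∫ y in x..b, f y * g y := by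
  have hab : a ≤ b := hx.1.trans hx.2
  have hint : IntervalIntegrable (fun y ↦ f y * g (max x y)) volume a b := by
    refine hf.mul_continuousOn (hg.comp (continuous_const.max continuous_id).continuousOn ?_)
    rw [uIcc_of_le hab]
    exact fun y hy ↦ ⟨hx.1.trans (le_max_left _ _), max_le hx.2 hy.2⟩
  have hx' : x ∈ uIcc a b := Icc_subset_uIcc hx
  rw [← integral_add_adjacent_intervals (hint.mono_set (uIcc_subset_uIcc_left hx'))
    (hint.mono_set (uIcc_subset_uIcc_right hx')), ← intervalIntegral.integral_mul_const]
  congr 1 <;> refine integral_congr fun y hy ↦ ?_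
  · rw [uIcc_of_le hx.1] at hy
    rw [max_eq_left hy.2]
  · rw [uIcc_of_le hx.2] at hy
    rw [max_eq_right hy.1]

theorem integral_integral_mul_mul_comp_max_eq (hab : a ≤ b) (hf : IntervalIntegrable f volume a b)
    (hg : AbsolutelyContinuousOnInterval g a b) (hgb : g b = 0) :
    ∫ x in a..b, ∫ y in a..b, f x * f y * g (max x y)
      = -∫ x in a..b, (∫ t in a..x, f t) ^ 2 * deriv g x := by
  have hgc : ContinuousOn g (Icc a b) := uIcc_of_le hab ▸ hg.continuousOn
  have hfg : IntervalIntegrable (fun y ↦ f y * g y) volume a b :=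
    hf.mul_continuousOn hg.continuousOn
  have hF := continuousOn_primitive_interval' hf left_mem_uIcc
  have hH := continuousOn_primitive_interval_left ((intervalIntegrable_iff').mp hfg)
  calc ∫ x in a..b, ∫ y in a..b, f x * f y * g (max x y)
      = ∫ x in a..b, (f x * ((∫ y in a..x, f y) * g x) + f x * ∫ y in x..b, f y * g y) := by
        refine integral_congr fun x hx ↦ ?_
        simp only [mul_assoc, intervalIntegral.integral_const_mul]
        rw [integral_mul_comp_max_eq hf hgc (uIcc_of_le hab ▸ hx), mul_add]
    _ = 2 * ∫ x in a..b, (∫ t in a..x, f t) * (f x * g x) := by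
        rw [integral_add (hf.mul_continuousOn (hF.fun_mul hg.continuousOn))
            (hf.mul_continuousOn hH),
          integral_mul_integral_tail_eq_integral_primitive_mul hf hfg, two_mul]
        congr 1
        exact integral_congr fun x _ ↦ by ring
    _ = -∫ x in a..b, (∫ t in a..x, f t) ^ 2 * deriv g x := by
        rw [integral_sq_primitive_mul_deriv_eq hf hg hgb, neg_neg]

end

lemma min_sub_mul_div_mul_eq_inv_max_sub_one {x y : ℝ} (hx : 0 < x) (hy : 0 < y) :
    (min (1 - x) (1 - y) - (1 - x) * (1 - y)) / (x * y) = (max x y)⁻¹ - 1 := by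
  rcases le_total x y with h | h
  · rw [min_eq_right (by linarith), max_eq_right h]
    field_simp
    ring
  · rw [min_eq_left (by linarith), max_eq_left h]
    field_simp
    ring

lemma absolutelyContinuousOnInterval_inv_sub_one {a b : ℝ} (ha : 0 < a) (hb : 0 < b) :
    AbsolutelyContinuousOnInterval (fun t : ℝ ↦ t⁻¹ - 1) a b := by
  refine ContDiffOn.absolutelyContinuousOnInterval ?_
  refine ((contDiffOn_inv ℝ).mono fun t ht ↦ ?_).sub contDiffOn_const
  exact (lt_min ha hb |>.trans_le ht.1).ne'

lemma intervalIntegrable_ite_le_and_lt (l r a b : ℝ) :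
    IntervalIntegrable (fun v ↦ if l ≤ v ∧ v < r then (1 : ℝ) else 0) volume a b := by
  have : (fun v ↦ if l ≤ v ∧ v < r then (1 : ℝ) else 0) = (Ico l r).indicator 1 := by
    ext v
    simp [indicator_apply]
  rw [this]
  exact ⟨intervalIntegrable_const.1.indicator measurableSet_Ico,
    intervalIntegrable_const.2.indicator measurableSet_Ico⟩

theorem stmt6_general (c ξ : ℝ) (K : ℕ)
    (p : ℕ → ℝ) (hp0 : 0 < p 1) (hpmono : ∀ k, 1 ≤ k → k ≤ K → p k < p (k + 1))
    (hp1 : p (K + 1) ≤ 1) (z : Fin K → ℝ)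
    (φ Φ : ℝ → ℝ)
    (hφ : ∀ v, φ v = ∑ k : Fin K,
      z k * (c * ξ * v ^ (-ξ) * (if p ((k : ℕ) + 1) ≤ v ∧ v < p ((k : ℕ) + 2) then 1 else 0)))
    (hΦ : ∀ v, Φ v = ∫ u in (p 1)..v, φ u) :
    (∫ v₁ in (p 1)..1, ∫ v₂ in (p 1)..1,
        φ v₁ * φ v₂ * ((min (1 - v₁) (1 - v₂) - (1 - v₁) * (1 - v₂)) / (v₁ * v₂)))
      = ∫ v in (p 1)..1, (Φ v) ^ 2 / v ^ 2 := by
  have hp_le : ∀ j ≤ K, p 1 ≤ p (j + 1) := by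
    intro j hj
    induction j with
    | zero => exact le_rfl
    | succ j ih => exact (ih (by omega)).trans (hpmono (j + 1) (by omega) hj).le
  have hle : p 1 ≤ 1 := (hp_le K le_rfl).trans hp1
  have hpos : ∀ v ∈ uIcc (p 1) 1, 0 < v := fun v hv ↦ hp0.trans_le (uIcc_of_le hle ▸ hv).1
  have hφint : IntervalIntegrable φ volume (p 1) 1 := by
    have hrpow : ContinuousOn (fun v : ℝ ↦ c * ξ * v ^ (-ξ)) (uIcc (p 1) 1) :=
      continuousOn_const.mul (continuousOn_id.rpow_const fun v hv ↦ Or.inl (hpos v hv).ne')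
    rw [funext hφ, ← Finset.sum_fn]
    exact IntervalIntegrable.sum _ fun k _ ↦
      ((intervalIntegrable_ite_le_and_lt _ _ _ _).continuousOn_mul hrpow).const_mul (z k)
  obtain rfl : Φ = fun v ↦ ∫ u in (p 1)..v, φ u := funext hΦ
  calc _ = ∫ v₁ in (p 1)..1, ∫ v₂ in (p 1)..1, φ v₁ * φ v₂ * (fun t ↦ t⁻¹ - 1) (max v₁ v₂) :=
        integral_congr fun x hx ↦ integral_congr fun y hy ↦ by
          rw [min_sub_mul_div_mul_eq_inv_max_sub_one (hpos x hx) (hpos y hy)]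
    _ = -∫ v in (p 1)..1, (∫ u in (p 1)..v, φ u) ^ 2 * deriv (fun t ↦ t⁻¹ - 1) v :=
        integral_integral_mul_mul_comp_max_eq hle hφint
          (absolutelyContinuousOnInterval_inv_sub_one hp0 one_pos) (by norm_num)
    _ = _ := by
        rw [← intervalIntegral.integral_neg]
        simp [div_eq_mul_inv]

/-- With `φ_k(v) = c ξ v^(−ξ) 1[p_k ≤ v < p_{k+1}]`,
`φ = Σ_k z_k φ_k` and `Φ(v) = ∫_{p₁}^{v} φ(u) du`, the quadratic form
`∫_{[p₁,1]²} φ(v₁)φ(v₂) (min{1−v₁,1−v₂} − (1−v₁)(1−v₂))/(v₁v₂) dv₁ dv₂`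
equals `∫_{p₁}^{1} Φ(v)²/v² dv`. -/
theorem stmt6 (c ξ : ℝ) (K : ℕ) (hc : 0 < c) (hξ0 : 0 < ξ) (hξ1 : ξ < 1) (hK : 1 ≤ K)
    (p : ℕ → ℝ) (hp0 : 0 < p 1) (hpmono : ∀ k, 1 ≤ k → k ≤ K → p k < p (k + 1))
    (hp1 : p (K + 1) ≤ 1) (z : Fin K → ℝ)
    (φ Φ : ℝ → ℝ)
    (hφ : ∀ v, φ v = ∑ k : Fin K,
      z k * (c * ξ * v ^ (-ξ) * (if p ((k : ℕ) + 1) ≤ v ∧ v < p ((k : ℕ) + 2) then 1 else 0)))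
    (hΦ : ∀ v, Φ v = ∫ u in (p 1)..v, φ u) :
    (∫ v₁ in (p 1)..1, ∫ v₂ in (p 1)..1,
        φ v₁ * φ v₂ * ((min (1 - v₁) (1 - v₂) - (1 - v₁) * (1 - v₂)) / (v₁ * v₂)))
      = ∫ v in (p 1)..1, (Φ v) ^ 2 / v ^ 2 :=
  stmt6_general c ξ K p hp0 hpmono hp1 z φ Φ hφ hΦ
end

section
/- Let K ≥ 2 and 0 < p_1 < ⋯ < p_{K+1} ≤ 1. For α > 1 with ξ = 1/α define r_k(α) = (p_{k+1}^(1−ξ) − p_k^(1−ξ))/(p_{K+1}^(1−ξ) − p_K^(1−ξ)) for k = 1,…,K−1 and r(α) = (r_1(α),…,r_{K−1}(α))ᵀ ∈ ℝ^{K−1}. Then the map α ↦ r(α) is injective on (1,∞); that is, if α ≠ α₀ with α, α₀ > 1, then r(α) ≠ r(α₀). -/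
open Real

/-- The vector `r(α) ∈ ℝ^{K−1}` with
`r_k(α) = (p_{k+1}^(1−ξ) − p_k^(1−ξ))/(p_{K+1}^(1−ξ) − p_K^(1−ξ))`, `ξ = 1/α`
(Lean index `k : Fin (K-1)` is paper index `k+1`). -/
noncomputable def rFun (K : ℕ) (p : ℕ → ℝ) (α : ℝ) : Fin (K - 1) → ℝ :=
  fun k =>
    (p ((k : ℕ) + 2) ^ (1 - 1 / α) - p ((k : ℕ) + 1) ^ (1 - 1 / α)) /
      (p (K + 1) ^ (1 - 1 / α) - p K ^ (1 - 1 / α))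

/-- Cauchy MVT for power functions: `(b^t − a^t)/(b^s − a^s) = (t/s) ξ^{t−s}`. -/
lemma aux_cauchy {a b s t : ℝ} (ha : 0 < a) (hab : a < b) (hs : 0 < s) (hst : s < t) :
    ∃ ξ, a < ξ ∧ ξ < b ∧ b ^ t - a ^ t = (b ^ s - a ^ s) * (t / s * ξ ^ (t - s)) := by
  have hcont : ∀ (q : ℝ), ContinuousOn (fun x : ℝ => x ^ q) (Set.Icc a b) := by
    intro q
    exact ContinuousOn.rpow_const continuousOn_id
      (fun x hx => Or.inl (ne_of_gt (lt_of_lt_of_le ha hx.1)))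
  have hderiv : ∀ (q : ℝ), ∀ x ∈ Set.Ioo a b,
      HasDerivAt (fun x : ℝ => x ^ q) (q * x ^ (q - 1)) x := by
    intro q x hx
    exact Real.hasDerivAt_rpow_const (Or.inl (ne_of_gt (lt_trans ha hx.1)))
  obtain ⟨ξ, hξ, h⟩ := exists_ratio_hasDerivAt_eq_ratio_slope (fun x : ℝ => x ^ t)
    (fun x : ℝ => t * x ^ (t - 1)) hab (hcont t) (hderiv t) (fun x : ℝ => x ^ s)
    (fun x : ℝ => s * x ^ (s - 1)) (hcont s) (hderiv s)
  refine ⟨ξ, hξ.1, hξ.2, ?_⟩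
  have hξ0 : 0 < ξ := lt_trans ha hξ.1
  -- h : (b^s - a^s) * (t * ξ^(t-1)) = (b^t - a^t) * (s * ξ^(s-1))
  have hsplit : ξ ^ (t - 1) = ξ ^ (t - s) * ξ ^ (s - 1) := by
    rw [← Real.rpow_add hξ0]; ring_nf
  have hξs : (0:ℝ) < ξ ^ (s - 1) := Real.rpow_pos_of_pos hξ0 _
  rw [hsplit] at h
  field_simp
  nlinarith [h, hξs, hs]

/-- Key inequality: the ratio is strictly decreasing in the exponent. -/
lemma aux_key {a b c d s t : ℝ} (ha : 0 < a) (hab : a < b) (hbc : b ≤ c) (hcd : c < d)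
    (hs : 0 < s) (hst : s < t) :
    (b ^ t - a ^ t) * (d ^ s - c ^ s) < (b ^ s - a ^ s) * (d ^ t - c ^ t) := by
  have hc : 0 < c := lt_of_lt_of_le (lt_trans ha hab) hbc
  obtain ⟨ξ, hξ1, hξ2, hξeq⟩ := aux_cauchy ha hab hs hst
  obtain ⟨η, hη1, hη2, hηeq⟩ := aux_cauchy hc hcd hs hst
  have hξ0 : 0 < ξ := lt_trans ha hξ1
  have hξη : ξ ^ (t - s) < η ^ (t - s) :=
    Real.rpow_lt_rpow (le_of_lt hξ0) (lt_of_le_of_lt (le_of_lt (lt_of_lt_of_le hξ2 hbc)) hη1)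
      (by linarith)
  have hba : 0 < b ^ s - a ^ s := by
    have := Real.rpow_lt_rpow (le_of_lt ha) hab hs; linarith
  have hdc : 0 < d ^ s - c ^ s := by
    have := Real.rpow_lt_rpow (le_of_lt hc) hcd hs; linarith
  have hts : 0 < t / s := div_pos (lt_trans hs hst) hs
  rw [hξeq, hηeq]
  calc (b ^ s - a ^ s) * (t / s * ξ ^ (t - s)) * (d ^ s - c ^ s)
      < (b ^ s - a ^ s) * (t / s * η ^ (t - s)) * (d ^ s - c ^ s) := by
        apply mul_lt_mul_of_pos_right _ hdc
        apply mul_lt_mul_of_pos_left _ hba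
        exact mul_lt_mul_of_pos_left hξη hts
    _ = (b ^ s - a ^ s) * ((d ^ s - c ^ s) * (t / s * η ^ (t - s))) := by ring

/-- **Identification.** The map `α ↦ r(α)` is injective on `(1,∞)`. -/
theorem stmt9 (K : ℕ) (hK : 2 ≤ K)
    (p : ℕ → ℝ) (hp0 : 0 < p 1) (hpmono : ∀ k, 1 ≤ k → k ≤ K → p k < p (k + 1))
    (hp1 : p (K + 1) ≤ 1) :
    ∀ α α₀ : ℝ, 1 < α → 1 < α₀ → α ≠ α₀ → rFun K p α ≠ rFun K p α₀ := by
  -- basic facts about p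
  have h12 : p 1 < p 2 := hpmono 1 (by omega) (by omega)
  have hKK : p K < p (K + 1) := hpmono K (by omega) le_rfl
  have h2K : p 2 ≤ p K := by
    have : ∀ m, 2 ≤ m → m ≤ K → p 2 ≤ p m := by
      intro m hm
      induction m, hm using Nat.le_induction with
      | base => intro _; rfl
      | succ n hn ih =>
        intro hnK
        exact le_trans (ih (by omega)) (le_of_lt (hpmono n (by omega) (by omega)))
    exact this K hK le_rfl
  -- the main monotonicity consequence, for exponents 0 < s < t
  have main : ∀ s t : ℝ, 0 < s → s < t →
      (p 2 ^ t - p 1 ^ t) / (p (K + 1) ^ t - p K ^ t) ≠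
      (p 2 ^ s - p 1 ^ s) / (p (K + 1) ^ s - p K ^ s) := by
    intro s t hs hst
    have hpK : 0 < p K := lt_of_lt_of_le (lt_trans hp0 h12) h2K
    have hdt : 0 < p (K + 1) ^ t - p K ^ t := by
      have := Real.rpow_lt_rpow (le_of_lt hpK) hKK (lt_trans hs hst); linarith
    have hds : 0 < p (K + 1) ^ s - p K ^ s := by
      have := Real.rpow_lt_rpow (le_of_lt hpK) hKK hs; linarith
    have := aux_key hp0 h12 h2K hKK hs hst
    intro heq
    rw [div_eq_div_iff hdt.ne' hds.ne'] at heq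
    nlinarith
  intro α α₀ hα hα₀ hne hr
  -- evaluate at index 0
  have hK1 : 0 < K - 1 := by omega
  have hr0 := congrFun hr ⟨0, hK1⟩
  simp only [rFun, Fin.val_mk, Nat.zero_add] at hr0
  have hsα : 0 < 1 - 1 / α := by
    have : 1 / α < 1 := by rw [div_lt_one (by linarith)]; linarith
    linarith
  have hsα₀ : 0 < 1 - 1 / α₀ := by
    have : 1 / α₀ < 1 := by rw [div_lt_one (by linarith)]; linarith
    linarith
  rcases lt_or_gt_of_ne hne with h | h
  · have hlt : 1 - 1 / α < 1 - 1 / α₀ := by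
      have : 1 / α₀ < 1 / α := one_div_lt_one_div_of_lt (by linarith) h
      linarith
    exact main _ _ hsα hlt hr0.symm
  · have hlt : 1 - 1 / α₀ < 1 - 1 / α := by
      have : 1 / α < 1 / α₀ := one_div_lt_one_div_of_lt (by linarith) h
      linarith
    exact main _ _ hsα₀ hlt hr0
end

section
/- Let a, b > 0 with a ≠ 1, b ≠ 1, and a ≠ b. Then the function f(x) = (a^x − 1)/(b^x − 1) is either strictly increasing on (0,∞) or strictly decreasing on (0,∞). -/
/-!
Put `r = log a / log b` and `u = b ^ x`, so that `a ^ x = u ^ r` and `f x = (u ^ r - 1) / (u - 1)` is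
the slope of the secant of `u ↦ u ^ r` through `1`. Since `r ∉ {0, 1}`, the second derivative
`r (r - 1) u ^ (r - 2)` has constant sign on `(0, ∞)`, so `u ↦ u ^ r` is strictly convex or strictly
concave there and the slope is strictly monotone in `u`. Finally `x ↦ b ^ x` is strictly monotone and
maps `(0, ∞)` into `(0, ∞) \ {1}`.
-/

open Real Set

lemma Real.deriv2_rpow_const (r x : ℝ) :
    deriv^[2] (fun x : ℝ => x ^ r) x = r * (r - 1) * x ^ (r - 2) := by
  simp [iter_deriv_rpow_const, descPochhammer_succ_right]

lemma Real.strictConvexOn_rpow_Ioi {r : ℝ} (hr : 0 < r * (r - 1)) :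
    StrictConvexOn ℝ (Ioi 0) fun x : ℝ => x ^ r := by
  refine strictConvexOn_of_deriv2_pos (convex_Ioi 0)
    (continuousOn_id.rpow_const fun x hx => Or.inl (ne_of_gt hx)) fun x hx => ?_
  rw [interior_Ioi] at hx
  rw [deriv2_rpow_const]
  exact mul_pos hr (rpow_pos_of_pos hx _)

lemma Real.strictConcaveOn_rpow_Ioi {r : ℝ} (hr : r * (r - 1) < 0) :
    StrictConcaveOn ℝ (Ioi 0) fun x : ℝ => x ^ r := by
  refine strictConcaveOn_of_deriv2_neg (convex_Ioi 0)
    (continuousOn_id.rpow_const fun x hx => Or.inl (ne_of_gt hx)) fun x hx => ?_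
  rw [interior_Ioi] at hx
  rw [deriv2_rpow_const]
  exact mul_neg_of_neg_of_pos hr (rpow_pos_of_pos hx _)

lemma Real.strictMonoOn_or_strictAntiOn_rpow_secant {r : ℝ} (hr₀ : r ≠ 0) (hr₁ : r ≠ 1) :
    StrictMonoOn (fun u : ℝ => (u ^ r - 1) / (u - 1)) (Ioi 0 \ {1}) ∨
      StrictAntiOn (fun u : ℝ => (u ^ r - 1) / (u - 1)) (Ioi 0 \ {1}) := by
  have h1 : (1 : ℝ) ∈ Ioi 0 := mem_Ioi.2 one_pos
  rcases (mul_ne_zero hr₀ (sub_ne_zero.2 hr₁)).lt_or_gt with hr | hr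
  · right
    intro u hu v hv huv
    simpa only [one_rpow] using
      (strictConcaveOn_rpow_Ioi hr).secant_strict_mono h1 hu.1 hv.1 hu.2 hv.2 huv
  · left
    intro u hu v hv huv
    simpa only [one_rpow] using
      (strictConvexOn_rpow_Ioi hr).secant_strict_mono h1 hu.1 hv.1 hu.2 hv.2 huv

lemma strictMonoOn_or_strictAntiOn_comp {α β γ : Type*} [Preorder α] [Preorder β] [Preorder γ]
    {g : β → γ} {f : α → β} {s : Set α} {t : Set β}
    (hg : StrictMonoOn g t ∨ StrictAntiOn g t) (hf : StrictMonoOn f s ∨ StrictAntiOn f s)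
    (hs : MapsTo f s t) : StrictMonoOn (g ∘ f) s ∨ StrictAntiOn (g ∘ f) s := by
  rcases hg with hg | hg <;> rcases hf with hf | hf
  · exact .inl (hg.comp hf hs)
  · exact .inr (hg.comp_strictAntiOn hf hs)
  · exact .inr (hg.comp_strictMonoOn hf hs)
  · exact .inl (hg.comp hf hs)

lemma Real.strictMono_or_strictAnti_rpow_of_base {b : ℝ} (hb : 0 < b) (hb₁ : b ≠ 1) :
    StrictMono (fun x : ℝ => b ^ x) ∨ StrictAnti (fun x : ℝ => b ^ x) := by
  rcases hb₁.lt_or_gt with hb₁ | hb₁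
  · exact .inr (strictAnti_rpow_of_base_lt_one hb hb₁)
  · exact .inl (strictMono_rpow_of_base_gt_one hb₁)

/-- For `a, b > 0` with `a ≠ 1`, `b ≠ 1`, `a ≠ b`, the function
`f(x) = (aˣ − 1)/(bˣ − 1)` is either strictly increasing or strictly decreasing on `(0,∞)`. -/
theorem stmt10 (a b : ℝ) (ha : 0 < a) (hb : 0 < b) (ha1 : a ≠ 1) (hb1 : b ≠ 1) (hab : a ≠ b) :
    StrictMonoOn (fun x : ℝ => (a ^ x - 1) / (b ^ x - 1)) (Ioi 0) ∨
      StrictAntiOn (fun x : ℝ => (a ^ x - 1) / (b ^ x - 1)) (Ioi 0) := by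
  have hlogb : log b ≠ 0 := log_ne_zero_of_pos_of_ne_one hb hb1
  set r := log a / log b
  have hr₀ : r ≠ 0 := div_ne_zero (log_ne_zero_of_pos_of_ne_one ha ha1) hlogb
  have hr₁ : r ≠ 1 := fun h => hab (log_injOn_pos ha hb ((div_eq_one_iff_eq hlogb).1 h))
  have hbase := strictMono_or_strictAnti_rpow_of_base hb hb1
  have hinj : Function.Injective fun x : ℝ => b ^ x := hbase.elim (·.injective) (·.injective)
  have hmaps : MapsTo (fun x : ℝ => b ^ x) (Ioi 0) (Ioi 0 \ {1}) := fun x hx =>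
    ⟨rpow_pos_of_pos hb x, fun h => hx.ne' (hinj (h.trans (rpow_zero b).symm))⟩
  have hfun : (fun x : ℝ => (a ^ x - 1) / (b ^ x - 1)) =
      (fun u : ℝ => (u ^ r - 1) / (u - 1)) ∘ fun x : ℝ => b ^ x := by
    funext x
    rw [Function.comp_apply, ← rpow_mul hb.le, rpow_def_of_pos ha, rpow_def_of_pos hb (x * r)]
    congr 3
    simp only [r]
    field_simp
  rw [hfun]
  exact strictMonoOn_or_strictAntiOn_comp (strictMonoOn_or_strictAntiOn_rpow_secant hr₀ hr₁)
    (hbase.imp (·.strictMonoOn _) (·.strictAntiOn _)) hmaps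
end

section
/- Let K ≥ 2, 0 < p_1 < ⋯ < p_{K+1} ≤ 1, α₀ > 1, and let W be a symmetric positive definite (K−1)×(K−1) real matrix. Define G(α) = (r(α) − r(α₀))ᵀ W (r(α) − r(α₀)) for α > 1. Then G(α₀) = 0 and G(α) > 0 for every α ∈ (1,∞) with α ≠ α₀; in particular, α₀ is the unique minimizer of G on (1,∞). -/
open Real

/-!
The last coordinate of `r(α)` is `φ(1 - 1/α)` with `φ(s) = (b^s - a^s)/(c^s - b^s)` for
`a = p_{K-1} < b = p_K < c = p_{K+1}`. Substituting `A = a^s`, `B = b^s`, `C = c^s`, `q = t/s`,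
the inequality `φ(t) < φ(s)` for `0 < s < t` says that the secant slopes of the strictly convex
function `x ↦ x^q` increase from `[A, B]` to `[B, C]`. Hence `φ` is injective, `r(α) ≠ r(α₀)` for
`α ≠ α₀`, and positive definiteness of `W` makes `G(α) > 0`.
-/

lemma rpow_sub_div_rpow_sub_lt {a b c s t : ℝ} (ha : 0 < a) (hab : a < b) (hbc : b < c)
    (hs : 0 < s) (hst : s < t) :
    (b ^ t - a ^ t) / (c ^ t - b ^ t) < (b ^ s - a ^ s) / (c ^ s - b ^ s) := by
  have hb : 0 < b := ha.trans hab
  have hc : 0 < c := hb.trans hbc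
  have hq : 1 < t / s := (one_lt_div hs).2 hst
  have hAB : a ^ s < b ^ s := rpow_lt_rpow ha.le hab hs
  have hBC : b ^ s < c ^ s := rpow_lt_rpow hb.le hbc hs
  have hpow : ∀ x : ℝ, 0 < x → (x ^ s) ^ (t / s) = x ^ t := fun x hx => by
    rw [← rpow_mul hx.le, mul_div_cancel₀ t hs.ne']
  have hslope := (strictConvexOn_rpow hq).slope_strict_mono_adjacent
    (Set.mem_Ici.2 (rpow_pos_of_pos ha s).le) (Set.mem_Ici.2 (rpow_pos_of_pos hc s).le) hAB hBC
  simp only [hpow a ha, hpow b hb, hpow c hc] at hslope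
  have hBCt : 0 < c ^ t - b ^ t := sub_pos.2 (rpow_lt_rpow hb.le hbc (hs.trans hst))
  rw [div_lt_div_iff₀ (sub_pos.2 hAB) (sub_pos.2 hBC)] at hslope
  rw [div_lt_div_iff₀ hBCt (sub_pos.2 hBC)]
  linarith

lemma strictAntiOn_rpow_sub_div_rpow_sub {a b c : ℝ} (ha : 0 < a) (hab : a < b) (hbc : b < c) :
    StrictAntiOn (fun s : ℝ => (b ^ s - a ^ s) / (c ^ s - b ^ s)) (Set.Ioi 0) :=
  fun _ hs _ _ hst => rpow_sub_div_rpow_sub_lt ha hab hbc hs hst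

lemma rFun_apply_last (K : ℕ) (hK : 2 ≤ K) (p : ℕ → ℝ) (α : ℝ) :
    rFun K p α ⟨K - 2, by omega⟩ =
      (p K ^ (1 - 1 / α) - p (K - 1) ^ (1 - 1 / α)) /
        (p (K + 1) ^ (1 - 1 / α) - p K ^ (1 - 1 / α)) := by
  simp only [rFun, show K - 2 + 2 = K by omega, show K - 2 + 1 = K - 1 by omega]

lemma one_sub_inv_injOn : Set.InjOn (fun α : ℝ => 1 - 1 / α) (Set.Ioi 0) := by
  intro α _ β _ h
  simpa using h

lemma rFun_injOn (K : ℕ) (hK : 2 ≤ K) (p : ℕ → ℝ) (hpos : 0 < p (K - 1))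
    (hlt : p (K - 1) < p K) (hlt' : p K < p (K + 1)) :
    Set.InjOn (rFun K p) (Set.Ioi 1) := by
  intro α hα β hβ h
  have hexp : ∀ γ : ℝ, 1 < γ → 1 - 1 / γ ∈ Set.Ioi (0 : ℝ) := fun γ hγ => by
    simpa using inv_lt_one_of_one_lt₀ hγ
  have hlast := congrFun h ⟨K - 2, by omega⟩
  rw [rFun_apply_last K hK, rFun_apply_last K hK] at hlast
  exact one_sub_inv_injOn (Set.mem_Ioi.2 (zero_lt_one.trans hα))
    (Set.mem_Ioi.2 (zero_lt_one.trans hβ))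
    ((strictAntiOn_rpow_sub_div_rpow_sub hpos hlt hlt').injOn (hexp α hα) (hexp β hβ) hlast)

theorem stmt11_general (K : ℕ) (hK : 2 ≤ K)
    (p : ℕ → ℝ) (hp0 : 0 < p 1) (hpmono : ∀ k, 1 ≤ k → k ≤ K → p k < p (k + 1))
    (α₀ : ℝ) (hα₀ : 1 < α₀)
    (W : Matrix (Fin (K - 1)) (Fin (K - 1)) ℝ)
    (hWpd : ∀ z : Fin (K - 1) → ℝ, z ≠ 0 → 0 < ∑ i, ∑ j, z i * W i j * z j)
    (G : ℝ → ℝ)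
    (hG : ∀ α, G α = ∑ i, ∑ j,
      (rFun K p α i - rFun K p α₀ i) * W i j * (rFun K p α j - rFun K p α₀ j)) :
    G α₀ = 0 ∧ ∀ α : ℝ, 1 < α → α ≠ α₀ → 0 < G α := by
  have hmono : StrictMonoOn p (Set.Icc 1 (K + 1)) :=
    strictMonoOn_of_lt_add_one Set.ordConnected_Icc fun k _ hk hk1 =>
      hpmono k hk.1 (by simp only [Set.mem_Icc] at hk1; omega)
  have hpos : 0 < p (K - 1) :=
    hp0.trans_le (hmono.monotoneOn (by simp) (by simp only [Set.mem_Icc]; omega) (by omega))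
  have hlt : p (K - 1) < p K := by
    simpa [show K - 1 + 1 = K by omega] using hpmono (K - 1) (by omega) (by omega)
  refine ⟨by simp [hG], fun α hα hne => ?_⟩
  have hdiff : rFun K p α - rFun K p α₀ ≠ 0 := fun h =>
    hne (rFun_injOn K hK p hpos hlt (hpmono K (by omega) le_rfl) hα hα₀ (sub_eq_zero.1 h))
  simpa [hG] using hWpd _ hdiff

/-- For a symmetric positive definite weighting matrix `W`, the population
objective `G(α) = (r(α) − r(α₀))ᵀ W (r(α) − r(α₀))` satisfies `G(α₀) = 0` and `G(α) > 0` for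
all `α ∈ (1,∞)`, `α ≠ α₀`; in particular `α₀` is the unique minimizer of `G` on `(1,∞)`. -/
theorem stmt11 (K : ℕ) (hK : 2 ≤ K)
    (p : ℕ → ℝ) (hp0 : 0 < p 1) (hpmono : ∀ k, 1 ≤ k → k ≤ K → p k < p (k + 1))
    (hp1 : p (K + 1) ≤ 1) (α₀ : ℝ) (hα₀ : 1 < α₀)
    (W : Matrix (Fin (K - 1)) (Fin (K - 1)) ℝ) (hWsymm : W.IsSymm)
    (hWpd : ∀ z : Fin (K - 1) → ℝ, z ≠ 0 → 0 < ∑ i, ∑ j, z i * W i j * z j)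
    (G : ℝ → ℝ)
    (hG : ∀ α, G α = ∑ i, ∑ j,
      (rFun K p α i - rFun K p α₀ i) * W i j * (rFun K p α j - rFun K p α₀ j)) :
    G α₀ = 0 ∧ ∀ α : ℝ, 1 < α → α ≠ α₀ → 0 < G α :=
  stmt11_general K hK p hp0 hpmono α₀ hα₀ W hWpd G hG
end

section
/- Let m ≥ 1, let Ω be a symmetric positive definite m×m real matrix, let R ∈ ℝ^m be nonzero, and let W be a symmetric positive definite m×m real matrix. Then (Rᵀ W Ω W R)/(Rᵀ W R)² ≥ 1/(Rᵀ Ω⁻¹ R), with equality when W = Ω⁻¹. In other words, among all weighting matrices W, the sandwich variance V(W) = (RᵀWR)⁻¹ RᵀWΩWR (RᵀWR)⁻¹ is minimized at W = Ω⁻¹, where it equals (Rᵀ Ω⁻¹ R)⁻¹. -/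
/-!
Put `a := W R`. Then `Rᵀ W R = a ⬝ R` and `Rᵀ W Ω W R = aᵀ Ω a`, and Cauchy–Schwarz for the inner
product `⟪x, y⟫ = xᵀ Ω y` applied to `a` and `Ω⁻¹ R` gives `(a ⬝ R)² ≤ (aᵀ Ω a) (Rᵀ Ω⁻¹ R)`.
For `W = Ω⁻¹` the sandwich `W Ω W` collapses to `Ω⁻¹`.
-/

open Matrix

namespace Matrix

variable {n : Type*} [Fintype n]

theorem IsSymm.dotProduct_mulVec_comm {A : Matrix n n ℝ} (hA : A.IsSymm) (x y : n → ℝ) :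
    x ⬝ᵥ A *ᵥ y = (A *ᵥ x) ⬝ᵥ y := by
  rw [dotProduct_mulVec, ← mulVec_transpose, hA.eq]

theorem PosSemidef.dotProduct_mulVec_sq_le {A : Matrix n n ℝ} (hA : A.PosSemidef) (x y : n → ℝ) :
    (x ⬝ᵥ A *ᵥ y) ^ 2 ≤ (x ⬝ᵥ A *ᵥ x) * (y ⬝ᵥ A *ᵥ y) := by
  classical
  have hsymm : y ⬝ᵥ A *ᵥ x = x ⬝ᵥ A *ᵥ y := by
    rw [(isHermitian_iff_isSymm.mp hA.isHermitian).dotProduct_mulVec_comm, dotProduct_comm]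
  simpa only [toLinearMap₂'_apply', hsymm, sq] using
    LinearMap.BilinForm.apply_mul_apply_le_of_forall_zero_le (toLinearMap₂' ℝ A)
      (fun z ↦ by simpa only [toLinearMap₂'_apply', star_trivial] using
        hA.dotProduct_mulVec_nonneg z) x y

theorem PosDef.dotProduct_sq_le [DecidableEq n] {Ω : Matrix n n ℝ} (hΩ : Ω.PosDef) (a r : n → ℝ) :
    (a ⬝ᵥ r) ^ 2 ≤ (a ⬝ᵥ Ω *ᵥ a) * (r ⬝ᵥ Ω⁻¹ *ᵥ r) := by
  have hΩΩinv : Ω *ᵥ (Ω⁻¹ *ᵥ r) = r := by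
    rw [mulVec_mulVec, mul_nonsing_inv _ hΩ.det_pos.ne'.isUnit, one_mulVec]
  have hsymm : Ω.IsSymm := isHermitian_iff_isSymm.mp hΩ.isHermitian
  simpa only [hΩΩinv, hsymm.dotProduct_mulVec_comm (Ω⁻¹ *ᵥ r), dotProduct_comm r]
    using hΩ.posSemidef.dotProduct_mulVec_sq_le a (Ω⁻¹ *ᵥ r)

end Matrix

theorem stmt14_general (m : ℕ)
    (Ω W : Matrix (Fin m) (Fin m) ℝ) (hΩ : Ω.PosDef) (hW : W.PosDef)
    (R : Fin m → ℝ) (hR : R ≠ 0) :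
    1 / (R ⬝ᵥ Ω⁻¹.mulVec R) ≤ (R ⬝ᵥ (W * Ω * W).mulVec R) / (R ⬝ᵥ W.mulVec R) ^ 2 ∧
      (W = Ω⁻¹ →
        (R ⬝ᵥ (W * Ω * W).mulVec R) / (R ⬝ᵥ W.mulVec R) ^ 2 = 1 / (R ⬝ᵥ Ω⁻¹.mulVec R)) := by
  have hWsymm : W.IsSymm := isHermitian_iff_isSymm.mp hW.isHermitian
  have hWR : 0 < R ⬝ᵥ W *ᵥ R := hW.dotProduct_mulVec_pos hR
  have hΩinvR : 0 < R ⬝ᵥ Ω⁻¹ *ᵥ R := hΩ.inv.dotProduct_mulVec_pos hR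
  have hsandwich : R ⬝ᵥ (W * Ω * W) *ᵥ R = (W *ᵥ R) ⬝ᵥ Ω *ᵥ (W *ᵥ R) := by
    rw [← mulVec_mulVec, ← mulVec_mulVec, hWsymm.dotProduct_mulVec_comm]
  have hcs : (R ⬝ᵥ W *ᵥ R) ^ 2 ≤ (R ⬝ᵥ (W * Ω * W) *ᵥ R) * (R ⬝ᵥ Ω⁻¹ *ᵥ R) := by
    simpa only [hsandwich, hWsymm.dotProduct_mulVec_comm R R] using
      hΩ.dotProduct_sq_le (W *ᵥ R) R
  refine ⟨?_, ?_⟩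
  · rw [div_le_div_iff₀ hΩinvR (by positivity)]
    linarith
  · rintro rfl
    rw [nonsing_inv_mul _ hΩ.det_pos.ne'.isUnit, one_mul, sq, div_mul_eq_div_div,
      div_self hWR.ne', one_div]

/-- **Efficient weighting.** For symmetric positive definite `Ω, W` and
`R ≠ 0`, the sandwich variance satisfies
`(Rᵀ W Ω W R)/(Rᵀ W R)² ≥ 1/(Rᵀ Ω⁻¹ R)`, with equality when `W = Ω⁻¹`. -/
theorem stmt14 (m : ℕ) (hm : 1 ≤ m)
    (Ω W : Matrix (Fin m) (Fin m) ℝ) (hΩ : Ω.PosDef) (hW : W.PosDef)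
    (R : Fin m → ℝ) (hR : R ≠ 0) :
    1 / (R ⬝ᵥ Ω⁻¹.mulVec R) ≤ (R ⬝ᵥ (W * Ω * W).mulVec R) / (R ⬝ᵥ W.mulVec R) ^ 2 ∧
      (W = Ω⁻¹ →
        (R ⬝ᵥ (W * Ω * W).mulVec R) / (R ⬝ᵥ W.mulVec R) ^ 2 = 1 / (R ⬝ᵥ Ω⁻¹.mulVec R)) :=
  stmt14_general m Ω W hΩ hW R hR
end
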